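/- (Cone invariance, Case 3) Suppose 0 < β < min{β_K, β_γ}, set t* = min{η + (βΓ(α))^{1/(α−1)}, η + β/Γ(3−α)}, fix b ∈ (0, t*) with b ≥ η and βΓ(α) > (b−η)^{α−1}, and let ρ > 0. Set σ₃ = min{σ_{3,γ}, c_{3,K}, 1}, where c_{3,K} = min{(βΓ(α)−(b−η)^{α−1})/(βΓ(α)+η^{α−1}), (βΓ(α)−(b−η)^{α−1})/((1−η)^{α−1}−βΓ(α))} and σ_{3,γ} = (β + (η−b)Γ(3−α))/max{β + ηΓ(3−α), (1−η)Γ(3−α) − β}, and let P_{σ₃} = {u ∈ C([0,1],ℝ) : min_{t∈[0,b]} u(t) ≥ σ₃·‖u‖_∞}. Then for every u ∈ P_{σ₃} with ‖u‖_∞ ≤ ρ, the function T(u) belongs to P_{σ₃}. -/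

import Mathlib

open Set MeasureTheory

/-- The Green's function `K(t,s) = β + ((η−s)^{α−1}/Γ(α))·χ_{[0,η]}(s) −
((t−s)^{α−1}/Γ(α))·χ_{[0,t]}(s)`. -/
noncomputable def Kker (α η β t s : ℝ) : ℝ :=
  β + (Set.Icc (0:ℝ) η).indicator (fun x => (η - x) ^ (α - 1) / Real.Gamma α) s
    - (Set.Icc (0:ℝ) t).indicator (fun x => (t - x) ^ (α - 1) / Real.Gamma α) s

/-- The function `γ(t) = β/Γ(3−α) + η − t`. -/
noncomputable def gam (α η β t : ℝ) : ℝ := β / Real.Gamma (3 - α) + η - t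

/-- `C([0,1],ℝ)` with the supremum norm. -/
abbrev CI := ContinuousMap (Set.Icc (0:ℝ) 1) ℝ

/-!
For `t ≤ b` the kernel satisfies `K(t,s) ≥ β − (b−η)^{α−1}/Γ(α) > 0`: by subadditivity of
`x ↦ x^{α−1}` its two Riemann–Liouville terms differ by at most `(b−η)^{α−1}/Γ(α)`.
Everywhere `|K| ≤ max(β + η^{α−1}/Γ(α), (1−η)^{α−1}/Γ(α) − β)`. Likewise `γ(t) ≥ γ(b) > 0`
for `t ≤ b` and `|γ| ≤ max(γ(0), 1 − γ(0))` on `[0,1]`. As `H₁, H₂, f ≥ 0`, this bounds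
`‖T u‖` from above and `T u (t)`, `t ≤ b`, from below by combinations of the same three
nonnegative quantities `H₁[u]`, `H₂[u]`, `∫ f(s, u(s)) ds`, and `σ₃` is small enough to
compare them coefficientwise.
-/

/-- The Riemann–Liouville kernel of order `p + 1` without its factor `1 / Γ(p + 1)`. -/
noncomputable def rlKernel (p c s : ℝ) : ℝ := (Icc 0 c).indicator (fun y => (c - y) ^ p) s

section rlKernel

variable {p c x y s : ℝ}

lemma rlKernel_nonneg : 0 ≤ rlKernel p c s :=
  indicator_nonneg (fun _ hy => Real.rpow_nonneg (sub_nonneg.2 hy.2) _) s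

lemma rlKernel_le_rpow (hp : 0 ≤ p) (hc : 0 ≤ c) : rlKernel p c s ≤ c ^ p := by
  by_cases hs : s ∈ Icc 0 c
  · rw [rlKernel, indicator_of_mem hs]
    exact Real.rpow_le_rpow (sub_nonneg.2 hs.2) (by linarith [hs.1]) hp
  · rw [rlKernel, indicator_of_notMem hs]
    exact Real.rpow_nonneg hc p

lemma rlKernel_mono (hp : 0 ≤ p) (hxy : x ≤ y) : rlKernel p x s ≤ rlKernel p y s := by
  by_cases hs : s ∈ Icc 0 x
  · have hsy : s ∈ Icc 0 y := ⟨hs.1, hs.2.trans hxy⟩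
    rw [rlKernel, rlKernel, indicator_of_mem hs, indicator_of_mem hsy]
    exact Real.rpow_le_rpow (sub_nonneg.2 hs.2) (by linarith) hp
  · rw [rlKernel, indicator_of_notMem hs]
    exact rlKernel_nonneg

lemma rlKernel_sub_le (hp0 : 0 ≤ p) (hp1 : p ≤ 1) (hxy : x ≤ y) :
    rlKernel p y s - rlKernel p x s ≤ (y - x) ^ p := by
  unfold rlKernel
  by_cases hsx : s ∈ Icc 0 x
  · have hsy : s ∈ Icc 0 y := ⟨hsx.1, hsx.2.trans hxy⟩
    rw [indicator_of_mem hsx, indicator_of_mem hsy, sub_le_iff_le_add]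
    have := Real.rpow_add_le_add_rpow (sub_nonneg.2 hxy) (sub_nonneg.2 hsx.2) hp0 hp1
    rwa [sub_add_sub_cancel] at this
  · rw [indicator_of_notMem hsx, sub_zero]
    by_cases hsy : s ∈ Icc 0 y
    · rw [indicator_of_mem hsy]
      have hxs : x < s := lt_of_not_ge fun h => hsx ⟨hsy.1, h⟩
      exact Real.rpow_le_rpow (sub_nonneg.2 hsy.2) (by linarith) hp0
    · rw [indicator_of_notMem hsy]
      exact Real.rpow_nonneg (sub_nonneg.2 hxy) p

lemma measurable_rlKernel : Measurable (rlKernel p c) :=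
  Measurable.indicator (by fun_prop) measurableSet_Icc

end rlKernel

section Kker

variable {α η β x c : ℝ}

lemma Kker_eq_rlKernel (α η β x : ℝ) :
    Kker α η β x =
      fun s => β + (rlKernel (α - 1) η s - rlKernel (α - 1) x s) / Real.Gamma α := by
  ext s
  simp only [Kker, rlKernel, div_eq_mul_inv, indicator_mul_const]
  ring

lemma measurable_Kker : Measurable (Kker α η β x) := by
  rw [Kker_eq_rlKernel]
  exact measurable_const.add ((measurable_rlKernel.sub measurable_rlKernel).div_const _)

lemma Kker_le (hα : 1 ≤ α) (hη : 0 ≤ η) (s : ℝ) :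
    Kker α η β x s ≤ β + η ^ (α - 1) / Real.Gamma α := by
  have hΓ : 0 < Real.Gamma α := Real.Gamma_pos_of_pos (by linarith)
  have hηx : rlKernel (α - 1) η s - rlKernel (α - 1) x s ≤ η ^ (α - 1) := by
    linarith [rlKernel_le_rpow (s := s) (sub_nonneg.2 hα) hη,
      rlKernel_nonneg (p := α - 1) (c := x) (s := s)]
  rw [Kker_eq_rlKernel, add_le_add_iff_left]
  exact div_le_div_of_nonneg_right hηx hΓ.le

lemma le_Kker (hα1 : 1 ≤ α) (hα2 : α ≤ 2) (hηc : η ≤ c) (hxc : x ≤ c) (s : ℝ) :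
    β - (c - η) ^ (α - 1) / Real.Gamma α ≤ Kker α η β x s := by
  have hΓ : 0 < Real.Gamma α := Real.Gamma_pos_of_pos (by linarith)
  have hp : 0 ≤ α - 1 := sub_nonneg.2 hα1
  have hxη : rlKernel (α - 1) x s - rlKernel (α - 1) η s ≤ (c - η) ^ (α - 1) := by
    linarith [rlKernel_mono (s := s) hp hxc, rlKernel_sub_le (s := s) hp (by linarith) hηc]
  rw [Kker_eq_rlKernel, sub_eq_add_neg, add_le_add_iff_left, ← neg_div]
  exact div_le_div_of_nonneg_right (by linarith) hΓ.le

end Kker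

noncomputable def KkerAbsBound (α η β : ℝ) : ℝ :=
  max (β + η ^ (α - 1) / Real.Gamma α) ((1 - η) ^ (α - 1) / Real.Gamma α - β)

noncomputable def KkerLowerBound (α η β b : ℝ) : ℝ := β - (b - η) ^ (α - 1) / Real.Gamma α

noncomputable def gamAbsBound (α η β : ℝ) : ℝ :=
  max (β / Real.Gamma (3 - α) + η) (1 - η - β / Real.Gamma (3 - α))

section bounds

variable {α η β b x : ℝ}

lemma abs_Kker_le (hα1 : 1 ≤ α) (hα2 : α ≤ 2) (hη0 : 0 ≤ η) (hη1 : η ≤ 1) (hx : x ≤ 1)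
    (s : ℝ) :
    |Kker α η β x s| ≤ KkerAbsBound α η β := by
  rw [abs_le, KkerAbsBound]
  constructor
  · rw [neg_le]
    exact le_max_of_le_right (by linarith [le_Kker (β := β) hα1 hα2 hη1 hx s])
  · exact (Kker_le hα1 hη0 s).trans (le_max_left _ _)

lemma abs_gam_le (hx0 : 0 ≤ x) (hx1 : x ≤ 1) : |gam α η β x| ≤ gamAbsBound α η β := by
  rw [abs_le, gam, gamAbsBound]
  constructor
  · rw [neg_le]
    exact le_max_of_le_right (by linarith)
  · exact le_max_of_le_left (by linarith)

end bounds

lemma intervalIntegral.integral_mul_mem_Icc {k g : ℝ → ℝ} {a b m M : ℝ} (hab : a ≤ b)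
    (hk : Measurable k) (hkb : ∀ s ∈ Icc a b, k s ∈ Icc m M)
    (hg : IntervalIntegrable g volume a b) (hg0 : ∀ s ∈ Icc a b, 0 ≤ g s) :
    (∫ s in a..b, k s * g s) ∈ Icc (m * ∫ s in a..b, g s) (M * ∫ s in a..b, g s) := by
  have hkg : IntervalIntegrable (fun s => k s * g s) volume a b := by
    rw [intervalIntegrable_iff_integrableOn_Ioc_of_le hab] at hg ⊢
    refine hg.bdd_mul (c := max |m| |M|) hk.aestronglyMeasurable ?_
    filter_upwards [ae_restrict_mem measurableSet_Ioc] with s hs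
    have hks := hkb s (Ioc_subset_Icc_self hs)
    exact abs_le_max_abs_abs hks.1 hks.2
  rw [← intervalIntegral.integral_const_mul, ← intervalIntegral.integral_const_mul]
  constructor
  · exact intervalIntegral.integral_mono_on hab (hg.const_mul m) hkg
      fun s hs => mul_le_mul_of_nonneg_right (hkb s hs).1 (hg0 s hs)
  · exact intervalIntegral.integral_mono_on hab hkg (hg.const_mul M)
      fun s hs => mul_le_mul_of_nonneg_right (hkb s hs).2 (hg0 s hs)

section coefficients

variable {α η β b σ : ℝ}

lemma mul_gamAbsBound_le (hα : α < 3)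
    (hσ : σ ≤ (β + (η - b) * Real.Gamma (3 - α)) /
      max (β + η * Real.Gamma (3 - α)) ((1 - η) * Real.Gamma (3 - α) - β)) :
    σ * gamAbsBound α η β ≤ gam α η β b := by
  have hΓ : 0 < Real.Gamma (3 - α) := Real.Gamma_pos_of_pos (by linarith)
  have hG : 0 < gamAbsBound α η β := by
    have := le_max_left (β / Real.Gamma (3 - α) + η) (1 - η - β / Real.Gamma (3 - α))
    have := le_max_right (β / Real.Gamma (3 - α) + η) (1 - η - β / Real.Gamma (3 - α))
    rw [gamAbsBound]
    linarith
  have hfrac : (β + (η - b) * Real.Gamma (3 - α)) /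
      max (β + η * Real.Gamma (3 - α)) ((1 - η) * Real.Gamma (3 - α) - β) =
      gam α η β b / gamAbsBound α η β := by
    have hnum : β + (η - b) * Real.Gamma (3 - α) = gam α η β b * Real.Gamma (3 - α) := by
      rw [gam]; field_simp; ring
    have hden : max (β + η * Real.Gamma (3 - α)) ((1 - η) * Real.Gamma (3 - α) - β) =
        gamAbsBound α η β * Real.Gamma (3 - α) := by
      rw [gamAbsBound, max_mul_of_nonneg _ _ hΓ.le]
      congr 1 <;> field_simp
    rw [hnum, hden, mul_div_mul_right _ _ hΓ.ne']
  rwa [hfrac, le_div_iff₀ hG] at hσ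

lemma mul_KkerAbsBound_le (hα : 0 < α)
    (hD₁ : 0 < β * Real.Gamma α + η ^ (α - 1))
    (hD₂ : 0 < (1 - η) ^ (α - 1) - β * Real.Gamma α)
    (hσ₁ : σ ≤ (β * Real.Gamma α - (b - η) ^ (α - 1)) / (β * Real.Gamma α + η ^ (α - 1)))
    (hσ₂ : σ ≤
      (β * Real.Gamma α - (b - η) ^ (α - 1)) / ((1 - η) ^ (α - 1) - β * Real.Gamma α)) :
    σ * KkerAbsBound α η β ≤ KkerLowerBound α η β b := by
  have hΓ : 0 < Real.Gamma α := Real.Gamma_pos_of_pos hα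
  have hmax : σ * max (β * Real.Gamma α + η ^ (α - 1)) ((1 - η) ^ (α - 1) - β * Real.Gamma α) ≤
      β * Real.Gamma α - (b - η) ^ (α - 1) := by
    rcases max_choice (β * Real.Gamma α + η ^ (α - 1)) ((1 - η) ^ (α - 1) - β * Real.Gamma α)
      with h | h <;> rw [h]
    exacts [(le_div_iff₀ hD₁).1 hσ₁, (le_div_iff₀ hD₂).1 hσ₂]
  have hK : KkerAbsBound α η β =
      max (β * Real.Gamma α + η ^ (α - 1)) ((1 - η) ^ (α - 1) - β * Real.Gamma α) /
        Real.Gamma α := by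
    rw [KkerAbsBound, ← max_div_div_right hΓ.le]
    congr 1 <;> field_simp
  have hm : KkerLowerBound α η β b = (β * Real.Gamma α - (b - η) ^ (α - 1)) / Real.Gamma α := by
    rw [KkerLowerBound]
    field_simp
  rw [hK, hm, ← mul_div_assoc]
  exact div_le_div_of_nonneg_right hmax hΓ.le

noncomputable def sigma3 (α η β b : ℝ) : ℝ :=
  min ((β + (η - b) * Real.Gamma (3 - α)) /
      max (β + η * Real.Gamma (3 - α)) ((1 - η) * Real.Gamma (3 - α) - β))
    (min (min
      ((β * Real.Gamma α - (b - η) ^ (α - 1)) / (β * Real.Gamma α + η ^ (α - 1)))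
      ((β * Real.Gamma α - (b - η) ^ (α - 1)) / ((1 - η) ^ (α - 1) - β * Real.Gamma α)))
      1)

lemma sigma3_nonneg (hα0 : 0 < α) (hα3 : α < 3) (hη0 : 0 ≤ η) (hβ0 : 0 < β)
    (hβK : β * Real.Gamma α < (1 - η) ^ (α - 1)) (hbγ : b < η + β / Real.Gamma (3 - α))
    (hbβ : (b - η) ^ (α - 1) < β * Real.Gamma α) :
    0 ≤ sigma3 α η β b := by
  have hΓα : 0 < Real.Gamma α := Real.Gamma_pos_of_pos hα0
  have hΓ3 : 0 < Real.Gamma (3 - α) := Real.Gamma_pos_of_pos (by linarith)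
  have hγb : 0 ≤ β + (η - b) * Real.Gamma (3 - α) := by
    have := (lt_div_iff₀ hΓ3).1 (sub_lt_iff_lt_add'.2 hbγ)
    linarith
  have hN : 0 ≤ β * Real.Gamma α - (b - η) ^ (α - 1) := (sub_pos.2 hbβ).le
  exact le_min (div_nonneg hγb (le_max_of_le_left (by positivity)))
    (le_min (le_min (div_nonneg hN (by positivity)) (div_nonneg hN (sub_pos.2 hβK).le))
      zero_le_one)

lemma sigma3_le_one : sigma3 α η β b ≤ 1 :=
  (min_le_right _ _).trans (min_le_right _ _)

lemma sigma3_mul_gamAbsBound_le (hα : α < 3) :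
    sigma3 α η β b * gamAbsBound α η β ≤ gam α η β b :=
  mul_gamAbsBound_le hα (min_le_left _ _)

lemma sigma3_mul_KkerAbsBound_le (hα : 0 < α) (hη0 : 0 ≤ η) (hβ0 : 0 < β)
    (hβK : β * Real.Gamma α < (1 - η) ^ (α - 1)) :
    sigma3 α η β b * KkerAbsBound α η β ≤ KkerLowerBound α η β b := by
  have hΓα : 0 < Real.Gamma α := Real.Gamma_pos_of_pos hα
  exact mul_KkerAbsBound_le hα (by positivity) (sub_pos.2 hβK)
    ((min_le_right _ _).trans ((min_le_left _ _).trans (min_le_left _ _)))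
    ((min_le_right _ _).trans ((min_le_left _ _).trans (min_le_right _ _)))

end coefficients

section integralOperator

variable {α η β A B b : ℝ} {g : ℝ → ℝ} {v : CI}

lemma norm_le_of_eq_gam_add_integral (hα1 : 1 ≤ α) (hα2 : α ≤ 2) (hη0 : 0 ≤ η) (hη1 : η ≤ 1)
    (hA : 0 ≤ A) (hB : 0 ≤ B) (hg : IntervalIntegrable g volume 0 1)
    (hg0 : ∀ s ∈ Icc (0 : ℝ) 1, 0 ≤ g s)
    (hv : ∀ t : Icc (0 : ℝ) 1,
      v t = A * gam α η β t + B + ∫ s in (0 : ℝ)..1, Kker α η β t s * g s) :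
    ‖v‖ ≤ A * gamAbsBound α η β + B + KkerAbsBound α η β * ∫ s in (0 : ℝ)..1, g s := by
  have hG : 0 ≤ gamAbsBound α η β := (abs_nonneg _).trans (abs_gam_le le_rfl zero_le_one)
  have hK : 0 ≤ KkerAbsBound α η β :=
    (abs_nonneg _).trans (abs_Kker_le hα1 hα2 hη0 hη1 zero_le_one 0)
  have hI : 0 ≤ ∫ s in (0 : ℝ)..1, g s := intervalIntegral.integral_nonneg zero_le_one hg0
  refine (ContinuousMap.norm_le _ (by positivity)).2 fun t => ?_
  have hJ := intervalIntegral.integral_mul_mem_Icc zero_le_one (measurable_Kker (β := β))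
    (fun s _ => abs_le.1 (abs_Kker_le hα1 hα2 hη0 hη1 t.2.2 s)) hg hg0
  rw [hv, Real.norm_eq_abs]
  calc _ ≤ |A * gam α η β t| + |B| + |∫ s in (0 : ℝ)..1, Kker α η β t s * g s| :=
        abs_add_three _ _ _
    _ ≤ _ := by
      rw [abs_mul, abs_of_nonneg hA, abs_of_nonneg hB]
      gcongr
      · exact abs_gam_le t.2.1 t.2.2
      · exact abs_le.2 ⟨by linarith [hJ.1], hJ.2⟩

lemma le_apply_of_eq_gam_add_integral (hα1 : 1 ≤ α) (hα2 : α ≤ 2) (hη0 : 0 ≤ η) (hη1 : η ≤ 1)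
    (hbη : η ≤ b) (hA : 0 ≤ A) (hg : IntervalIntegrable g volume 0 1)
    (hg0 : ∀ s ∈ Icc (0 : ℝ) 1, 0 ≤ g s)
    (hv : ∀ t : Icc (0 : ℝ) 1,
      v t = A * gam α η β t + B + ∫ s in (0 : ℝ)..1, Kker α η β t s * g s)
    (t : Icc (0 : ℝ) 1) (htb : (t : ℝ) ≤ b) :
    A * gam α η β b + B + KkerLowerBound α η β b * (∫ s in (0 : ℝ)..1, g s) ≤ v t := by
  have hγ : gam α η β b ≤ gam α η β t := by rw [gam, gam]; linarith
  have hJ := intervalIntegral.integral_mul_mem_Icc zero_le_one (measurable_Kker (β := β))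
    (fun s _ => ⟨le_Kker hα1 hα2 hbη htb s,
      le_of_abs_le (abs_Kker_le hα1 hα2 hη0 hη1 t.2.2 s)⟩) hg hg0
  rw [hv]
  gcongr
  exact hJ.1

end integralOperator

theorem stmt_18_general
    (α η β : ℝ) (hα1 : 1 < α) (hα2 : α ≤ 2) (hη0 : 0 < η) (hη1 : η < 1) (hβ0 : 0 < β)
    (f : ℝ → ℝ → ℝ)
    (hf : ContinuousOn (fun p : ℝ × ℝ => f p.1 p.2) (Set.Icc (0:ℝ) 1 ×ˢ Set.univ))
    (hf0 : ∀ t ∈ Set.Icc (0:ℝ) 1, ∀ x : ℝ, 0 ≤ f t x)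
    (H₁ H₂ : CI → ℝ)
    (hH₁0 : ∀ u, 0 ≤ H₁ u) (hH₂0 : ∀ u, 0 ≤ H₂ u)
    (T : CI → CI)
    (hT : ∀ (u : CI) (t : Set.Icc (0:ℝ) 1), T u t = H₁ u * gam α η β (t : ℝ) + H₂ u +
      ∫ s in (0:ℝ)..1, Kker α η β (t : ℝ) s * f s (Set.IccExtend zero_le_one u s))
    (hβ : β < min ((1 - η) ^ (α - 1) / Real.Gamma α) ((1 - η) * Real.Gamma (3 - α)))
    (b : ℝ)
    (hbt : b < min (η + (β * Real.Gamma α) ^ (1 / (α - 1))) (η + β / Real.Gamma (3 - α)))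
    (hbη : η ≤ b) (hbβ : (b - η) ^ (α - 1) < β * Real.Gamma α)
    (ρ : ℝ)
    (σ₃ : ℝ)
    (hσ₃ : σ₃ = min ((β + (η - b) * Real.Gamma (3 - α)) /
        max (β + η * Real.Gamma (3 - α)) ((1 - η) * Real.Gamma (3 - α) - β))
      (min (min
        ((β * Real.Gamma α - (b - η) ^ (α - 1)) / (β * Real.Gamma α + η ^ (α - 1)))
        ((β * Real.Gamma α - (b - η) ^ (α - 1)) / ((1 - η) ^ (α - 1) - β * Real.Gamma α)))
        1))
    :
    ∀ u : CI, (∀ t : Set.Icc (0:ℝ) 1, (t : ℝ) ≤ b → σ₃ * ‖u‖ ≤ u t) → ‖u‖ ≤ ρ →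
      ∀ t : Set.Icc (0:ℝ) 1, (t : ℝ) ≤ b → σ₃ * ‖T u‖ ≤ T u t := by
  intro u _ _ t htb
  have hΓα : 0 < Real.Gamma α := Real.Gamma_pos_of_pos (by linarith)
  have hβK : β * Real.Gamma α < (1 - η) ^ (α - 1) := (lt_div_iff₀ hΓα).1 (lt_min_iff.1 hβ).1
  rw [show σ₃ = sigma3 α η β b from hσ₃]
  set g : ℝ → ℝ := fun s => f s (Set.IccExtend zero_le_one u s)
  have hg : IntervalIntegrable g volume 0 1 :=
    (hf.comp (continuous_id.prodMk u.continuous.Icc_extend').continuousOn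
      fun s hs => ⟨hs, trivial⟩).intervalIntegrable_of_Icc zero_le_one
  have hg0 : ∀ s ∈ Icc (0 : ℝ) 1, 0 ≤ g s := fun s hs => hf0 s hs _
  have hI : 0 ≤ ∫ s in (0 : ℝ)..1, g s := intervalIntegral.integral_nonneg zero_le_one hg0
  have hTu_norm := norm_le_of_eq_gam_add_integral hα1.le hα2 hη0.le hη1.le (hH₁0 u) (hH₂0 u)
    hg hg0 (hT u)
  have hTu_t := le_apply_of_eq_gam_add_integral hα1.le hα2 hη0.le hη1.le hbη (hH₁0 u) hg hg0
    (hT u) t htb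
  have hσγ : sigma3 α η β b * gamAbsBound α η β ≤ gam α η β b :=
    sigma3_mul_gamAbsBound_le (by linarith)
  have hσK : sigma3 α η β b * KkerAbsBound α η β ≤ KkerLowerBound α η β b :=
    sigma3_mul_KkerAbsBound_le (by linarith) hη0.le hβ0 hβK
  calc sigma3 α η β b * ‖T u‖
      ≤ sigma3 α η β b *
          (H₁ u * gamAbsBound α η β + H₂ u + KkerAbsBound α η β * ∫ s in (0 : ℝ)..1, g s) :=
        mul_le_mul_of_nonneg_left hTu_norm
          (sigma3_nonneg (by linarith) (by linarith) hη0.le hβ0 hβK (lt_min_iff.1 hbt).2 hbβ)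
    _ ≤ H₁ u * gam α η β b + H₂ u + KkerLowerBound α η β b * ∫ s in (0 : ℝ)..1, g s := by
        linear_combination mul_le_mul_of_nonneg_left hσγ (hH₁0 u) +
          mul_le_mul_of_nonneg_right hσK hI + mul_le_of_le_one_left (hH₂0 u) sigma3_le_one
    _ ≤ T u t := hTu_t

/-- Cone invariance, Case 3: if `0 < β < min{β_K, β_γ}` and
`b ∈ (0, t*)` with `b ≥ η` and `βΓ(α) > (b−η)^{α−1}`, then `T` maps
`P_{σ₃} ∩ closure(Ω_ρ)` into the cone
`P_{σ₃} = {u : min_{[0,b]} u ≥ σ₃‖u‖_∞}`, where `σ₃ = min{σ_{3,γ}, c_{3,K}, 1}`. -/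
theorem stmt_18
    (α η β : ℝ) (hα1 : 1 < α) (hα2 : α ≤ 2) (hη0 : 0 < η) (hη1 : η < 1) (hβ0 : 0 < β)
    (f : ℝ → ℝ → ℝ)
    (hf : ContinuousOn (fun p : ℝ × ℝ => f p.1 p.2) (Set.Icc (0:ℝ) 1 ×ˢ Set.univ))
    (hf0 : ∀ t ∈ Set.Icc (0:ℝ) 1, ∀ x : ℝ, 0 ≤ f t x)
    (H₁ H₂ : CI → ℝ) (hH₁c : Continuous H₁) (hH₂c : Continuous H₂)
    (hH₁0 : ∀ u, 0 ≤ H₁ u) (hH₂0 : ∀ u, 0 ≤ H₂ u)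
    (hH₁b : ∀ S : Set CI, Bornology.IsBounded S → Bornology.IsBounded (H₁ '' S))
    (hH₂b : ∀ S : Set CI, Bornology.IsBounded S → Bornology.IsBounded (H₂ '' S))
    (T : CI → CI)
    (hT : ∀ (u : CI) (t : Set.Icc (0:ℝ) 1), T u t = H₁ u * gam α η β (t : ℝ) + H₂ u +
      ∫ s in (0:ℝ)..1, Kker α η β (t : ℝ) s * f s (Set.IccExtend zero_le_one u s))
    (hβ : β < min ((1 - η) ^ (α - 1) / Real.Gamma α) ((1 - η) * Real.Gamma (3 - α)))
    (b : ℝ) (hb0 : 0 < b)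
    (hbt : b < min (η + (β * Real.Gamma α) ^ (1 / (α - 1))) (η + β / Real.Gamma (3 - α)))
    (hbη : η ≤ b) (hbβ : (b - η) ^ (α - 1) < β * Real.Gamma α)
    (ρ : ℝ) (hρ : 0 < ρ)
    (σ₃ : ℝ)
    (hσ₃ : σ₃ = min ((β + (η - b) * Real.Gamma (3 - α)) /
        max (β + η * Real.Gamma (3 - α)) ((1 - η) * Real.Gamma (3 - α) - β))
      (min (min
        ((β * Real.Gamma α - (b - η) ^ (α - 1)) / (β * Real.Gamma α + η ^ (α - 1)))
        ((β * Real.Gamma α - (b - η) ^ (α - 1)) / ((1 - η) ^ (α - 1) - β * Real.Gamma α)))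
        1))
    :
    ∀ u : CI, (∀ t : Set.Icc (0:ℝ) 1, (t : ℝ) ≤ b → σ₃ * ‖u‖ ≤ u t) → ‖u‖ ≤ ρ →
      ∀ t : Set.Icc (0:ℝ) 1, (t : ℝ) ≤ b → σ₃ * ‖T u‖ ≤ T u t :=
  stmt_18_general α η β hα1 hα2 hη0 hη1 hβ0 f hf hf0 H₁ H₂ hH₁0 hH₂0 T hT hβ b hbt hbη hbβ ρ σ₃ hσ₃
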